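/- Let G be a linearly ordered abelian group and p a prime. Then the set X = {g ∈ G : every x ∈ G with 0 ≤ x ≤ |g| lies in pG} is a convex subgroup of G, X is p-divisible (X ⊆ pX), and X contains every p-divisible convex subgroup of G; hence X is the largest p-divisible convex subgroup of G. -/

import Mathlib

/-!
Any subgroup `S` of a linearly ordered abelian group has a largest convex subgroup inside it,
its convex core `{g | [0, |g|] ⊆ S}`; the set `X` of the theorem is the convex core of `pG`.
It is `p`-divisible because for `g = p • y ∈ X` the interval `[0, |y|]` lies inside `[0, |g|]`,
so `y ∈ X` as well; and a `p`-divisible convex subgroup `D` satisfies `D ⊆ pD ⊆ pG`, so it lies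
in the convex core of `pG`.
-/

/-- `nH = {n • h : h ∈ H}` as a subgroup. -/
def smulSub {G : Type*} [AddCommGroup G] (n : ℕ) (H : AddSubgroup G) : AddSubgroup G :=
  AddSubgroup.map (n • AddMonoidHom.id G) H

/-- A subgroup `H` of a linearly ordered abelian group is convex if
`0 ≤ g ≤ h` and `h ∈ H` imply `g ∈ H`. -/
def IsConvexSubgroup {G : Type*} [AddCommGroup G] [LinearOrder G] [IsOrderedAddMonoid G] (H : AddSubgroup G) : Prop :=
  ∀ g h : G, 0 ≤ g → g ≤ h → h ∈ H → g ∈ H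

section SmulSub

variable {G : Type*} [AddCommGroup G] {n : ℕ}

lemma mem_smulSub {H : AddSubgroup G} {g : G} : g ∈ smulSub n H ↔ ∃ h ∈ H, n • h = g := by
  simp [smulSub]

lemma smulSub_mono {H K : AddSubgroup G} (hHK : H ≤ K) : smulSub n H ≤ smulSub n K :=
  AddSubgroup.map_mono hHK

end SmulSub

namespace AddSubgroup

variable {G : Type*} [AddCommGroup G] [LinearOrder G] [IsOrderedAddMonoid G] {S : AddSubgroup G}

def convexCore (S : AddSubgroup G) : AddSubgroup G where
  carrier := {g | ∀ x, 0 ≤ x → x ≤ |g| → x ∈ S}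
  zero_mem' x hx hx0 := by
    rw [le_antisymm (hx0.trans_eq abs_zero) hx]
    exact S.zero_mem
  neg_mem' {g} hg x hx hxg := hg x hx (hxg.trans_eq (abs_neg g))
  add_mem' {a b} ha hb x hx hxab := by
    rcases le_or_gt x |a| with hxa | hax
    · exact ha x hx hxa
    · have hrest : x - |a| ∈ S :=
        hb _ (sub_nonneg.mpr hax.le) (sub_le_iff_le_add'.mpr (hxab.trans (abs_add_le a b)))
      simpa using S.add_mem (ha |a| (abs_nonneg a) le_rfl) hrest

lemma mem_convexCore_of_abs_le {g h : G} (hh : h ∈ S.convexCore) (hgh : |g| ≤ |h|) :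
    g ∈ S.convexCore :=
  fun x hx hxg ↦ hh x hx (hxg.trans hgh)

lemma isConvexSubgroup_convexCore : IsConvexSubgroup S.convexCore := fun _ _ hg hgh hh ↦
  mem_convexCore_of_abs_le hh (abs_le_abs_of_nonneg hg hgh)

lemma convexCore_le : S.convexCore ≤ S := by
  intro g hg
  rcases abs_choice g with hab | hab
  · exact hab ▸ hg |g| (abs_nonneg g) le_rfl
  · simpa [hab] using S.neg_mem (hg |g| (abs_nonneg g) le_rfl)

lemma le_convexCore {D : AddSubgroup G} (hD : IsConvexSubgroup D) (hDS : D ≤ S) :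
    D ≤ S.convexCore := by
  intro d hd x hx hxd
  have habs : |d| ∈ D := by
    rcases abs_choice d with hab | hab <;> rw [hab]
    exacts [hd, D.neg_mem hd]
  exact hDS (hD x |d| hx hxd habs)

lemma convexCore_smulSub_top_le_smulSub (n : ℕ) :
    (smulSub n (⊤ : AddSubgroup G)).convexCore ≤
      smulSub n (smulSub n (⊤ : AddSubgroup G)).convexCore := by
  intro g hg
  obtain ⟨y, -, rfl⟩ := mem_smulSub.mp (convexCore_le hg)
  rw [mem_smulSub]
  rcases eq_or_ne n 0 with rfl | hn
  · exact ⟨0, zero_mem _, by simp⟩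
  · refine ⟨y, mem_convexCore_of_abs_le hg ?_, rfl⟩
    rw [abs_nsmul]
    exact le_self_nsmul (abs_nonneg y) hn

end AddSubgroup

open AddSubgroup in
theorem largest_pdivisible_convex_subgroup_general {G : Type*} [AddCommGroup G] [LinearOrder G] [IsOrderedAddMonoid G]
    (p : ℕ) :
    ∃ X : AddSubgroup G,
      (X : Set G) = {g : G | ∀ x : G, 0 ≤ x → x ≤ |g| → x ∈ smulSub p (⊤ : AddSubgroup G)} ∧
      IsConvexSubgroup X ∧
      X ≤ smulSub p X ∧
      ∀ D : AddSubgroup G, IsConvexSubgroup D → D ≤ smulSub p D → D ≤ X :=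
  ⟨(smulSub p ⊤).convexCore, rfl, isConvexSubgroup_convexCore,
    convexCore_smulSub_top_le_smulSub p,
    fun _ hD hdiv ↦ le_convexCore hD (hdiv.trans (smulSub_mono le_top))⟩

/-- For a linearly ordered abelian group `G` and a prime `p`, the set
`X = {g : every x with 0 ≤ x ≤ |g| lies in pG}` is a convex subgroup of `G`, it is
`p`-divisible (`X ⊆ pX`), and it contains every `p`-divisible convex subgroup; hence it is
the largest `p`-divisible convex subgroup of `G`. -/
theorem largest_pdivisible_convex_subgroup {G : Type*} [AddCommGroup G] [LinearOrder G] [IsOrderedAddMonoid G]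
    (p : ℕ) (hp : p.Prime) :
    ∃ X : AddSubgroup G,
      (X : Set G) = {g : G | ∀ x : G, 0 ≤ x → x ≤ |g| → x ∈ smulSub p (⊤ : AddSubgroup G)} ∧
      IsConvexSubgroup X ∧
      X ≤ smulSub p X ∧
      ∀ D : AddSubgroup G, IsConvexSubgroup D → D ≤ smulSub p D → D ≤ X :=
  largest_pdivisible_convex_subgroup_general p
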